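/- arXiv:1308.4191 — 6 statements merged into one kernel-verified Lean document; each statement's English description precedes it below -/
import Mathlib

section
/- Let A_C : ℝ^J → ℝ^J, let N be a positive integer, and let η : ℕ → ℝ be a summable sequence of positive real numbers. Suppose a sequence {y^k} in ℝ^J is generated as follows: y⁰ is given, and for each k, y^{k+1} = A_C(y^k + ∑_{n=0}^{N−1} β_{k,n} v^{k,n}), where each ‖v^{k,n}‖ ≤ 1 and β_{k,n} = η_{ℓ(k,n)} for an injective index map ℓ : ℕ × {0,…,N−1} → ℕ. Then there exist a bounded sequence {v^k} in ℝ^J and nonnegative scalars {β_k} with ∑_{k=0}^∞ β_k < ∞ such that y^{k+1} = A_C(y^k + β_k v^k) for all k ≥ 0; that is, the sequence {y^k} is generated from A_C by bounded perturbations with summable coefficients. -/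
/-- first assertion of Theorem 4.2: a sequence generated by the Superiorized
Version of the Basic Algorithm, i.e. `y^{k+1} = A_C(y^k + ∑_{n<N} β_{k,n} v^{k,n})` with
`‖v^{k,n}‖ ≤ 1` and `β_{k,n} = η_{ℓ(k,n)}` where `{η_ℓ}` is a summable positive sequence and
`ℓ` is injective, is generated from `A_C` by bounded perturbations with nonnegative summable
coefficients: `y^{k+1} = A_C(y^k + β_k v^k)` with `{v^k}` bounded, `β_k ≥ 0`, `∑ β_k < ∞`. -/
theorem superiorized_is_bounded_perturbation
    (J : ℕ)
    (A : EuclideanSpace ℝ (Fin J) → EuclideanSpace ℝ (Fin J))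
    (N : ℕ) (hN : 0 < N)
    (η : ℕ → ℝ) (hηpos : ∀ l, 0 < η l) (hηsum : Summable η)
    (y : ℕ → EuclideanSpace ℝ (Fin J))
    (v : ℕ → Fin N → EuclideanSpace ℝ (Fin J)) (hv : ∀ k n, ‖v k n‖ ≤ 1)
    (ℓ : ℕ → Fin N → ℕ)
    (hℓ : Function.Injective (fun p : ℕ × Fin N => ℓ p.1 p.2))
    (hrec : ∀ k : ℕ, y (k + 1) = A (y k + ∑ n : Fin N, η (ℓ k n) • v k n)) :
    ∃ (V : ℕ → EuclideanSpace ℝ (Fin J)) (β : ℕ → ℝ),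
      (∃ M : ℝ, ∀ k, ‖V k‖ ≤ M) ∧ (∀ k, 0 ≤ β k) ∧ Summable β ∧
      ∀ k : ℕ, y (k + 1) = A (y k + β k • V k) := by
  set S : ℕ → EuclideanSpace ℝ (Fin J) := fun k => ∑ n : Fin N, η (ℓ k n) • v k n with hS
  set β : ℕ → ℝ := fun k => ∑ n : Fin N, η (ℓ k n) with hβ
  have hβpos : ∀ k, 0 < β k := by
    intro k
    have : Nonempty (Fin N) := ⟨⟨0, hN⟩⟩
    exact Finset.sum_pos (fun n _ => hηpos _) Finset.univ_nonempty
  refine ⟨fun k => (β k)⁻¹ • S k, β, ⟨1, ?_⟩, fun k => (hβpos k).le, ?_, ?_⟩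
  · intro k
    have hSle : ‖S k‖ ≤ β k := by
      calc ‖S k‖ ≤ ∑ n : Fin N, ‖η (ℓ k n) • v k n‖ := norm_sum_le _ _
        _ ≤ ∑ n : Fin N, η (ℓ k n) := by
            refine Finset.sum_le_sum fun n _ => ?_
            rw [norm_smul, Real.norm_eq_abs, abs_of_pos (hηpos _)]
            nlinarith [hv k n, (hηpos (ℓ k n)).le, norm_nonneg (v k n)]
    rw [norm_smul, Real.norm_eq_abs, abs_of_pos (inv_pos.2 (hβpos k)),
      inv_mul_le_iff₀ (hβpos k)]
    linarith
  · refine summable_sum fun n _ => ?_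
    refine hηsum.comp_injective (fun a b hab => ?_)
    have := hℓ (show (fun p : ℕ × Fin N => ℓ p.1 p.2) (a, n) = (fun p : ℕ × Fin N => ℓ p.1 p.2)
      (b, n) from hab)
    exact congrArg Prod.fst this
  · intro k
    rw [hrec k, smul_smul, mul_inv_cancel₀ (hβpos k).ne', one_smul]
end

section
/- Let J be a positive integer, let Ω be a nonempty subset of ℝ^J, let A_C : ℝ^J → ℝ^J be nonexpansive with A_C(ℝ^J) ⊆ Ω, and let Prox : ℝ^J → ℝ be uniformly continuous and nonnegative on Ω. Assume the Basic Algorithm defined by A_C is boundedly convergent over Ω. Let ε > 0 be such that for every x⁰ ∈ Ω the unperturbed sequence x^{k+1} = A_C(x^k) has some iterate with Prox(x^k) ≤ ε. Let N be a positive integer and η : ℕ → ℝ a summable sequence of positive reals, and let {y^k} be any sequence with y⁰ ∈ Ω generated by y^{k+1} = A_C(y^k + ∑_{n=0}^{N−1} β_{k,n} v^{k,n}), where each ‖v^{k,n}‖ ≤ 1 and β_{k,n} = η_{ℓ(k,n)} for an injective index map ℓ : ℕ × {0,…,N−1} → ℕ. Then for every ε′ > ε, there exists an index k with Prox(y^k)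 ≤ ε′ (i.e., the ε′-output of {y^k} exists). -/
/-- second assertion of Theorem 4.2: under the hypotheses of the strong
perturbation resilience theorem (nonexpansive `A_C` with range in `Ω`, uniformly continuous
`Prox` nonnegative on `Ω`, bounded convergence over `Ω`), if `ε > 0` is such that every
unperturbed orbit from `Ω` has an iterate with `Prox ≤ ε`, then for every `ε′ > ε` every
sequence produced by the Superiorized Version of the Basic Algorithm,
`y^{k+1} = A_C(y^k + ∑_{n<N} β_{k,n} v^{k,n})` with `‖v^{k,n}‖ ≤ 1` and `β_{k,n} = η_{ℓ(k,n)}`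
for a summable positive `{η_ℓ}` and injective `ℓ`, has an iterate with `Prox(y^k) ≤ ε′`. -/
theorem superiorized_eps_output
    (J : ℕ) (hJ : 0 < J)
    (Ω : Set (EuclideanSpace ℝ (Fin J))) (hΩ : Ω.Nonempty)
    (A : EuclideanSpace ℝ (Fin J) → EuclideanSpace ℝ (Fin J))
    (hAΩ : ∀ x, A x ∈ Ω)
    (hAne : ∀ x y, ‖A x - A y‖ ≤ ‖x - y‖)
    (Prox : EuclideanSpace ℝ (Fin J) → ℝ)
    (hProxUC : UniformContinuous Prox)
    (hProxNonneg : ∀ x ∈ Ω, 0 ≤ Prox x)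
    (hconv : ∃ γ : ℝ, 0 ≤ γ ∧ ∀ x0 ∈ Ω, ∃ l ∈ Ω,
      Filter.Tendsto (fun k => A^[k] x0) Filter.atTop (nhds l) ∧ Prox l ≤ γ)
    (ε : ℝ) (hε : 0 < ε)
    (hout : ∀ x0 ∈ Ω, ∃ k : ℕ, Prox (A^[k] x0) ≤ ε)
    (N : ℕ) (hN : 0 < N)
    (η : ℕ → ℝ) (hηpos : ∀ l, 0 < η l) (hηsum : Summable η)
    (y : ℕ → EuclideanSpace ℝ (Fin J)) (hy0 : y 0 ∈ Ω)
    (v : ℕ → Fin N → EuclideanSpace ℝ (Fin J)) (hv : ∀ k n, ‖v k n‖ ≤ 1)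
    (ℓ : ℕ → Fin N → ℕ)
    (hℓ : Function.Injective (fun p : ℕ × Fin N => ℓ p.1 p.2))
    (hrec : ∀ k : ℕ, y (k + 1) = A (y k + ∑ n : Fin N, η (ℓ k n) • v k n))
    (ε' : ℝ) (hε' : ε < ε') :
    ∃ k : ℕ, Prox (y k) ≤ ε' := by

  classical
  set b : ℕ → ℝ := fun i => ∑ n : Fin N, η (ℓ i n) with hb_def
  have hbnonneg : ∀ i, 0 ≤ b i := fun i => Finset.sum_nonneg fun n _ => (hηpos _).le
  have hbsum : Summable b := by
    apply summable_sum
    intro n _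
    have hinj : Function.Injective (fun i : ℕ => ℓ i n) := by
      intro i j hij
      have := hℓ (a₁ := (i, n)) (a₂ := (j, n)) hij
      exact (Prod.ext_iff.mp this).1
    exact hηsum.comp_injective hinj
  have hyΩ : ∀ k, y k ∈ Ω := by
    intro k
    cases k with
    | zero => exact hy0
    | succ k => rw [hrec]; exact hAΩ _
  obtain ⟨δ, hδpos, hδ⟩ := Metric.uniformContinuous_iff.mp hProxUC (ε' - ε) (by linarith)
  have htail : Filter.Tendsto (fun m => ∑' i, b (i + m)) Filter.atTop (nhds 0) :=
    tendsto_sum_nat_add b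
  obtain ⟨m, hm⟩ := (htail.eventually (gt_mem_nhds hδpos)).exists
  have hpartial : ∀ j, ∑ i ∈ Finset.Ico m (m + j), b i < δ := by
    intro j
    have h1 : ∑ i ∈ Finset.Ico m (m + j), b i = ∑ i ∈ Finset.range j, b (i + m) := by
      rw [Finset.sum_Ico_eq_sum_range]
      simp [Nat.add_comm]
    have hsumm : Summable (fun i => b (i + m)) := (summable_nat_add_iff m).2 hbsum
    calc ∑ i ∈ Finset.Ico m (m + j), b i = ∑ i ∈ Finset.range j, b (i + m) := h1
      _ ≤ ∑' i, b (i + m) := Summable.sum_le_tsum _ (fun i _ => hbnonneg _) hsumm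
      _ < δ := hm
  obtain ⟨k, hk⟩ := hout (y m) (hyΩ m)
  have hiter : ∀ j, ‖y (m + j) - A^[j] (y m)‖ ≤ ∑ i ∈ Finset.Ico m (m + j), b i := by
    intro j
    induction j with
    | zero => simp
    | succ j ih =>
      have h1 : y (m + (j + 1)) = A (y (m + j) + ∑ n : Fin N, η (ℓ (m + j) n) • v (m + j) n) :=
        hrec (m + j)
      have h2 : A^[j + 1] (y m) = A (A^[j] (y m)) := Function.iterate_succ_apply' A j (y m)
      have he : ‖∑ n : Fin N, η (ℓ (m + j) n) • v (m + j) n‖ ≤ b (m + j) := by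
        calc ‖∑ n : Fin N, η (ℓ (m + j) n) • v (m + j) n‖
            ≤ ∑ n : Fin N, ‖η (ℓ (m + j) n) • v (m + j) n‖ := norm_sum_le _ _
          _ ≤ ∑ n : Fin N, η (ℓ (m + j) n) := by
              apply Finset.sum_le_sum
              intro n _
              rw [norm_smul, Real.norm_eq_abs, abs_of_pos (hηpos _)]
              nlinarith [hv (m + j) n, (hηpos (ℓ (m + j) n)).le]
          _ = b (m + j) := rfl
      calc ‖y (m + (j + 1)) - A^[j + 1] (y m)‖
          = ‖A (y (m + j) + ∑ n : Fin N, η (ℓ (m + j) n) • v (m + j) n) - A (A^[j] (y m))‖ := by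
            rw [h1, h2]
        _ ≤ ‖(y (m + j) + ∑ n : Fin N, η (ℓ (m + j) n) • v (m + j) n) - A^[j] (y m)‖ :=
            hAne _ _
        _ = ‖(y (m + j) - A^[j] (y m)) + ∑ n : Fin N, η (ℓ (m + j) n) • v (m + j) n‖ := by
            rw [add_sub_right_comm]
        _ ≤ ‖y (m + j) - A^[j] (y m)‖ + ‖∑ n : Fin N, η (ℓ (m + j) n) • v (m + j) n‖ :=
            norm_add_le _ _
        _ ≤ (∑ i ∈ Finset.Ico m (m + j), b i) + b (m + j) := add_le_add ih he
        _ = ∑ i ∈ Finset.Ico m (m + (j + 1)), b i := by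
            rw [show m + (j + 1) = (m + j) + 1 from rfl,
              Finset.sum_Ico_succ_top (Nat.le_add_right m j)]
  have hd : dist (y (m + k)) (A^[k] (y m)) < δ := by
    rw [dist_eq_norm]
    exact lt_of_le_of_lt (hiter k) (hpartial k)
  have hp := hδ hd
  rw [Real.dist_eq, abs_lt] at hp
  exact ⟨m + k, by linarith [hp.2]⟩
end

section
/- Let a¹, …, a^I be nonzero vectors in ℝ^J, b ∈ ℝ^I, and suppose the set C = { x ∈ ℝ^J : ⟨aⁱ, x⟩ = b_i for i = 1, …, I, and 0 ≤ x_j ≤ 1 for all j } is nonempty. Define A_C = Q ∘ U_I ∘ ⋯ ∘ U_1, where U_i(x) = x + ((b_i − ⟨aⁱ, x⟩)/‖aⁱ‖²) aⁱ and Q is componentwise clipping to [0,1]. Then for every x⁰ ∈ [0,1]^J, the sequence x^{k+1} = A_C(x^k) converges to a point x* ∈ C. -/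
open scoped RealInnerProductSpace

/-!
Each `U_i` and `Q` is the metric projection `T` onto a closed convex set containing `C`, so
`⟪x - T x, c - T x⟫ ≤ 0` for `c ∈ C`: either `T x = x` or `T x` is strictly closer than `x` to
every point of `C`. This property survives composition, and a composite fixes `x` only if each
factor does, so the fixed points of `A_C` lie in `C`. The iterates are therefore Fejér monotone
with respect to `C`, hence bounded; at a cluster point `x*` the distance to a fixed `c ∈ C` is the
same before and after applying the continuous map `A_C`, which forces `x* ∈ C`, and Fejér
monotonicity with respect to `x*` upgrades subsequential convergence to convergence.
-/

open Filter Topology Metric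

def StrictQuasiNonexpansive {X : Type*} [MetricSpace X] (T : X → X) (C : Set X) : Prop :=
  ∀ c ∈ C, ∀ x, T x = x ∨ dist (T x) c < dist x c

namespace StrictQuasiNonexpansive

variable {X : Type*} [MetricSpace X] {f g : X → X} {C : Set X}

theorem dist_le (hf : StrictQuasiNonexpansive f C) {c : X} (hc : c ∈ C) (x : X) :
    dist (f x) c ≤ dist x c := by
  rcases hf c hc x with h | h
  · rw [h]
  · exact h.le

theorem id : StrictQuasiNonexpansive (id : X → X) C :=
  fun _ _ _ => Or.inl rfl

theorem comp (hg : StrictQuasiNonexpansive g C) (hf : StrictQuasiNonexpansive f C) :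
    StrictQuasiNonexpansive (g ∘ f) C := by
  intro c hc x
  rcases hf c hc x with hfx | hfx
  · simpa only [Function.comp_apply, hfx] using hg c hc x
  · exact Or.inr ((hg.dist_le hc (f x)).trans_lt hfx)

theorem apply_eq_of_comp_apply_eq (hg : StrictQuasiNonexpansive g C)
    (hf : StrictQuasiNonexpansive f C) (hC : C.Nonempty) {x : X} (hx : g (f x) = x) :
    f x = x ∧ g x = x := by
  obtain ⟨c, hc⟩ := hC
  have hfx : f x = x := (hf c hc x).resolve_right fun hlt => by
    have hle := hg.dist_le hc (f x)
    rw [hx] at hle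
    exact hle.not_gt hlt
  exact ⟨hfx, by rwa [hfx] at hx⟩

theorem exists_tendsto_iterate [ProperSpace X] {T : X → X} (hT : StrictQuasiNonexpansive T C)
    (hcont : Continuous T) (hfix : ∀ x, T x = x → x ∈ C) (hC : C.Nonempty) (x₀ : X) :
    ∃ xs ∈ C, Tendsto (fun k => T^[k] x₀) atTop (𝓝 xs) := by
  obtain ⟨c, hc⟩ := hC
  have hanti : ∀ c ∈ C, Antitone fun k => dist (T^[k] x₀) c := fun c hc =>
    antitone_nat_of_succ_le fun k => by
      rw [Function.iterate_succ_apply']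
      exact hT.dist_le hc _
  obtain ⟨xs, -, φ, hφ, hlim⟩ := tendsto_subseq_of_bounded isBounded_closedBall
    fun k => mem_closedBall.2 (hanti c hc (Nat.zero_le k))
  have hdist : Tendsto (fun k => dist (T^[k] x₀) c) atTop (𝓝 (⨅ k, dist (T^[k] x₀) c)) :=
    tendsto_atTop_ciInf (hanti c hc) ⟨0, by rintro _ ⟨k, rfl⟩; exact dist_nonneg⟩
  have hxs : dist xs c = ⨅ k, dist (T^[k] x₀) c :=
    tendsto_nhds_unique (hlim.dist tendsto_const_nhds) (hdist.comp hφ.tendsto_atTop)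
  have hTxs : dist (T xs) c = ⨅ k, dist (T^[k] x₀) c := by
    refine tendsto_nhds_unique (((hcont.tendsto xs).comp hlim).dist tendsto_const_nhds) ?_
    simpa only [Function.comp_def, ← Function.iterate_succ_apply'] using
      (hdist.comp (tendsto_add_atTop_nat 1)).comp hφ.tendsto_atTop
  have hxsC : xs ∈ C :=
    hfix xs ((hT c hc xs).resolve_right (by rw [hxs, hTxs]; exact lt_irrefl _))
  refine ⟨xs, hxsC, tendsto_iff_dist_tendsto_zero.2 ?_⟩
  exact (tendsto_iff_tendsto_subseq_of_antitone (hanti xs hxsC) hφ.tendsto_atTop).2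
    (tendsto_iff_dist_tendsto_zero.1 hlim)

end StrictQuasiNonexpansive

theorem foldl_comp_induction {α : Type*} (P : (α → α) → Prop) (hid : P id)
    (hcomp : ∀ f g, P f → P g → P (g ∘ f)) {n : ℕ} (f : Fin n → α → α) (hf : ∀ i, P (f i)) :
    P fun x => Fin.foldl n (fun z i => f i z) x := by
  induction n with
  | zero =>
    simp only [Fin.foldl_zero]
    exact hid
  | succ n ih =>
    simp only [Fin.foldl_succ_last]
    exact hcomp _ _ (ih (fun i => f i.castSucc) fun i => hf _) (hf _)

theorem StrictQuasiNonexpansive.forall_apply_eq_of_foldl_eq {X : Type*} [MetricSpace X]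
    {C : Set X} (hC : C.Nonempty) {n : ℕ} {f : Fin n → X → X}
    (hf : ∀ i, StrictQuasiNonexpansive (f i) C) {x : X}
    (hx : Fin.foldl n (fun z i => f i z) x = x) (i : Fin n) : f i x = x := by
  induction n with
  | zero => exact i.elim0
  | succ n ih =>
    rw [Fin.foldl_succ_last] at hx
    have hsweep := foldl_comp_induction (StrictQuasiNonexpansive · C) id
      (fun _ _ hf hg => hg.comp hf) (fun i => f i.castSucc) fun i => hf _
    obtain ⟨hprev, hlast⟩ := (hf (Fin.last n)).apply_eq_of_comp_apply_eq hsweep hC hx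
    induction i using Fin.lastCases with
    | last => exact hlast
    | cast i => exact ih (fun i => hf _) hprev i

section InnerProductSpace

variable {E : Type*} [NormedAddCommGroup E] [InnerProductSpace ℝ E]

theorem eq_or_dist_lt_of_inner_nonpos {x p c : E} (h : ⟪x - p, c - p⟫ ≤ 0) :
    p = x ∨ dist p c < dist x c := by
  rcases eq_or_ne p x with hpx | hpx
  · exact Or.inl hpx
  refine Or.inr ?_
  have hsplit : ‖x - c‖ ^ 2 = ‖x - p‖ ^ 2 - 2 * ⟪x - p, c - p⟫ + ‖c - p‖ ^ 2 := by
    rw [← norm_sub_sq_real, sub_sub_sub_cancel_right]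
  have hpos : 0 < ‖x - p‖ := norm_pos_iff.2 (sub_ne_zero.2 hpx.symm)
  rw [dist_eq_norm, dist_eq_norm, ← norm_neg (p - c), neg_sub]
  exact lt_of_pow_lt_pow_left₀ 2 (norm_nonneg _) (by nlinarith)

noncomputable def kaczmarzStep (a : E) (b : ℝ) (x : E) : E :=
  x + ((b - ⟪a, x⟫) / ‖a‖ ^ 2) • a

variable {a : E} {b : ℝ} {c : E}

theorem inner_kaczmarzStep (hc : ⟪a, c⟫ = b) (x : E) : ⟪a, kaczmarzStep a b x⟫ = b := by
  rcases eq_or_ne a 0 with rfl | ha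
  · -- with `a = 0` the step is the identity (`· / 0 = 0`), and `hc` forces `b = 0`
    simpa using hc
  have : ‖a‖ ≠ 0 := norm_ne_zero_iff.2 ha
  rw [kaczmarzStep, inner_add_right, real_inner_smul_right, real_inner_self_eq_norm_sq]
  field_simp
  ring

theorem strictQuasiNonexpansive_kaczmarzStep {C : Set E} (hC : ∀ c ∈ C, ⟪a, c⟫ = b) :
    StrictQuasiNonexpansive (kaczmarzStep a b) C := by
  intro c hc x
  refine eq_or_dist_lt_of_inner_nonpos (le_of_eq ?_)
  have hdir : x - kaczmarzStep a b x = (-((b - ⟪a, x⟫) / ‖a‖ ^ 2)) • a := by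
    rw [kaczmarzStep, sub_add_cancel_left, neg_smul]
  rw [hdir, real_inner_smul_left, inner_sub_right, inner_kaczmarzStep (hC c hc), hC c hc,
    sub_self, mul_zero]

theorem continuous_kaczmarzStep : Continuous (kaczmarzStep a b) := by
  unfold kaczmarzStep
  fun_prop

end InnerProductSpace

section Box

variable {ι : Type*}

def boxClip (l u : ℝ) (x : EuclideanSpace ℝ ι) : EuclideanSpace ℝ ι :=
  WithLp.toLp 2 fun j => min (max (x j) l) u

theorem continuous_boxClip (l u : ℝ) : Continuous (boxClip (ι := ι) l u) := by
  unfold boxClip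
  fun_prop

theorem boxClip_mem {l u : ℝ} (hlu : l ≤ u) (x : EuclideanSpace ℝ ι) (j : ι) :
    l ≤ boxClip l u x j ∧ boxClip l u x j ≤ u :=
  ⟨le_min (le_max_right _ _) hlu, min_le_right _ _⟩

theorem sub_mul_sub_clip_nonpos {l u v c : ℝ} (hl : l ≤ c) (hu : c ≤ u) :
    (v - min (max v l) u) * (c - min (max v l) u) ≤ 0 := by
  rcases le_total v l with h | h
  · rw [max_eq_right h, min_eq_left (hl.trans hu)]
    exact mul_nonpos_of_nonpos_of_nonneg (by linarith) (by linarith)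
  · rw [max_eq_left h]
    rcases le_total v u with h' | h'
    · simp [min_eq_left h']
    · rw [min_eq_right h']
      exact mul_nonpos_of_nonneg_of_nonpos (by linarith) (by linarith)

theorem strictQuasiNonexpansive_boxClip [Fintype ι] {l u : ℝ} {C : Set (EuclideanSpace ℝ ι)}
    (hC : ∀ c ∈ C, ∀ j, l ≤ c j ∧ c j ≤ u) : StrictQuasiNonexpansive (boxClip l u) C := by
  intro c hc x
  refine eq_or_dist_lt_of_inner_nonpos ?_
  rw [PiLp.inner_apply]
  refine Finset.sum_nonpos fun j _ => ?_
  simpa [boxClip, mul_comm] using sub_mul_sub_clip_nonpos (v := x j) (hC c hc j).1 (hC c hc j).2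

end Box

theorem art_with_box_converges_general
    (I J : ℕ)
    (a : Fin I → EuclideanSpace ℝ (Fin J))
    (b : Fin I → ℝ)
    (hC : ∃ x : EuclideanSpace ℝ (Fin J),
      (∀ i, ⟪a i, x⟫ = b i) ∧ (∀ j, 0 ≤ x j ∧ x j ≤ 1))
    (U : Fin I → EuclideanSpace ℝ (Fin J) → EuclideanSpace ℝ (Fin J))
    (hU : ∀ i x, U i x = x + ((b i - ⟪a i, x⟫) / ‖a i‖ ^ 2) • a i)
    (Q : EuclideanSpace ℝ (Fin J) → EuclideanSpace ℝ (Fin J))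
    (hQ : ∀ (x : EuclideanSpace ℝ (Fin J)) (j : Fin J), Q x j = min (max (x j) 0) 1)
    (AC : EuclideanSpace ℝ (Fin J) → EuclideanSpace ℝ (Fin J))
    (hAC : ∀ x, AC x = Q (Fin.foldl I (fun z i => U i z) x))
    (x0 : EuclideanSpace ℝ (Fin J)) :
    ∃ xs : EuclideanSpace ℝ (Fin J),
      (∀ i, ⟪a i, xs⟫ = b i) ∧ (∀ j, 0 ≤ xs j ∧ xs j ≤ 1) ∧
      Filter.Tendsto (fun k => AC^[k] x0) Filter.atTop (nhds xs) := by
  set C : Set (EuclideanSpace ℝ (Fin J)) := {x | (∀ i, ⟪a i, x⟫ = b i) ∧ ∀ j, 0 ≤ x j ∧ x j ≤ 1}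
  have hUk : ∀ i, U i = kaczmarzStep (a i) (b i) := fun i => funext (hU i)
  have hQc : Q = boxClip 0 1 := funext fun x => by ext j; exact hQ x j
  have hACc : AC = Q ∘ fun x => Fin.foldl I (fun z i => U i z) x := funext hAC
  have hUC : ∀ i, StrictQuasiNonexpansive (U i) C := fun i =>
    hUk i ▸ strictQuasiNonexpansive_kaczmarzStep fun _ hc => hc.1 i
  have hQC : StrictQuasiNonexpansive Q C :=
    hQc ▸ strictQuasiNonexpansive_boxClip fun _ hc => hc.2
  have hsweep : StrictQuasiNonexpansive (fun x => Fin.foldl I (fun z i => U i z) x) C :=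
    foldl_comp_induction (StrictQuasiNonexpansive · C) .id
      (fun _ _ hf hg => hg.comp hf) U hUC
  have hcont : Continuous AC := hACc ▸ (hQc ▸ continuous_boxClip 0 1).comp
    (foldl_comp_induction Continuous continuous_id (fun _ _ hf hg => hg.comp hf) U
      fun i => hUk i ▸ continuous_kaczmarzStep)
  have hfix : ∀ x, AC x = x → x ∈ C := by
    intro x hx
    rw [hACc] at hx
    obtain ⟨hsweepx, hQx⟩ := hQC.apply_eq_of_comp_apply_eq hsweep hC hx
    obtain ⟨c, hc⟩ := hC
    refine ⟨fun i => ?_, fun j => ?_⟩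
    · rw [← StrictQuasiNonexpansive.forall_apply_eq_of_foldl_eq ⟨c, hc⟩ hUC hsweepx i, hUk]
      exact inner_kaczmarzStep (hc.1 i) x
    · rw [← hQx, hQc]
      exact boxClip_mem zero_le_one x j
  obtain ⟨xs, ⟨hxs_hyper, hxs_box⟩, hlim⟩ :=
    (hACc ▸ hQC.comp hsweep).exists_tendsto_iterate hcont hfix hC x0
  exact ⟨xs, hxs_hyper, hxs_box, hlim⟩

/-- convergence of ART with interleaved box projection. If
`C = {x : ⟨aⁱ,x⟩ = b_i for all i, and 0 ≤ x_j ≤ 1 for all j}` is nonempty and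
`A_C = Q ∘ U_I ∘ ⋯ ∘ U_1` (Kaczmarz sweeps followed by clipping to `[0,1]`), then for every
`x⁰ ∈ [0,1]^J` the sequence `x^{k+1} = A_C(x^k)` converges to a point `x* ∈ C`. -/
theorem art_with_box_converges
    (I J : ℕ)
    (a : Fin I → EuclideanSpace ℝ (Fin J)) (ha : ∀ i, a i ≠ 0)
    (b : Fin I → ℝ)
    (hC : ∃ x : EuclideanSpace ℝ (Fin J),
      (∀ i, ⟪a i, x⟫ = b i) ∧ (∀ j, 0 ≤ x j ∧ x j ≤ 1))
    (U : Fin I → EuclideanSpace ℝ (Fin J) → EuclideanSpace ℝ (Fin J))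
    (hU : ∀ i x, U i x = x + ((b i - ⟪a i, x⟫) / ‖a i‖ ^ 2) • a i)
    (Q : EuclideanSpace ℝ (Fin J) → EuclideanSpace ℝ (Fin J))
    (hQ : ∀ (x : EuclideanSpace ℝ (Fin J)) (j : Fin J), Q x j = min (max (x j) 0) 1)
    (AC : EuclideanSpace ℝ (Fin J) → EuclideanSpace ℝ (Fin J))
    (hAC : ∀ x, AC x = Q (Fin.foldl I (fun z i => U i z) x))
    (x0 : EuclideanSpace ℝ (Fin J)) (hx0 : ∀ j, 0 ≤ x0 j ∧ x0 j ≤ 1) :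
    ∃ xs : EuclideanSpace ℝ (Fin J),
      (∀ i, ⟪a i, xs⟫ = b i) ∧ (∀ j, 0 ≤ xs j ∧ xs j ≤ 1) ∧
      Filter.Tendsto (fun k => AC^[k] x0) Filter.atTop (nhds xs) :=
  art_with_box_converges_general I J a b hC U hU Q hQ AC hAC x0
end

section
/- Let a¹, …, a^I be nonzero vectors in ℝ^J, b ∈ ℝ^I, and suppose C = { x ∈ [0,1]^J : ⟨aⁱ, x⟩ = b_i for i = 1, …, I } is nonempty. Define A_C = Q ∘ U_I ∘ ⋯ ∘ U_1, where U_i(x) = x + ((b_i − ⟨aⁱ, x⟩)/‖aⁱ‖²) aⁱ and Q is componentwise clipping to [0,1], and define Prox(x) = √(∑_{i=1}^I (b_i − ⟨aⁱ, x⟩)²). Then for every ε > 0, every y⁰ ∈ [0,1]^J, every bounded sequence {v^k} in ℝ^J, and all scalars β_k ≥ 0 with ∑_{k=0}^∞ β_k < ∞, the sequence generated by y^{k+1} = A_C(y^k + β_k v^k) has some iterate with Prox(y^k) ≤ ε. -/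
open scoped RealInnerProductSpace

/-!
Fix `c ∈ C`. Each `U_i` is the orthogonal projection onto the hyperplane `⟨aⁱ, x⟩ = b_i`, so
along a sweep the squared distance to `c` drops by the squared length of every step, and clipping
to the box `[0,1]^J ∋ c` does not increase it. The `i`-th residual of `x` is at most `‖aⁱ‖` times
the distance from `x` to the point reached after `U_i`, and by Cauchy–Schwarz that distance is
at most `√(I · decrease)`, since the squared step lengths add up to at most the decrease. Hence
`Prox(x)² ≤ I · ∑ ‖aⁱ‖² · (‖x − c‖² − ‖A_C x − c‖²)`.
Along the perturbed iterates, `‖y^k − c‖` is quasi-Fejér because `∑ β_k ‖v^k‖ < ∞`, so these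
decreases are summable and `Prox → 0` at the points `y^k + β_k v^k`; as `Prox` is Lipschitz and
`β_k → 0`, also `Prox(y^k) → 0`.
-/

open Finset Filter Topology

theorem summable_of_succ_add_le_add {d γ e : ℕ → ℝ} (hd : ∀ k, 0 ≤ d k) (he : ∀ k, 0 ≤ e k)
    (hγ : Summable γ) (hγ0 : ∀ k, 0 ≤ γ k) (h : ∀ k, d (k + 1) + e k ≤ d k + γ k) :
    Summable e := by
  refine summable_of_sum_range_le he (c := d 0 + ∑' k, γ k) fun n => ?_
  have htele : ∑ k ∈ range n, e k ≤ d 0 - d n + ∑ k ∈ range n, γ k := by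
    rw [← sum_range_sub' d n, ← sum_add_distrib]
    exact sum_le_sum fun k _ => by linarith [h k]
  linarith [hd n, hγ.sum_le_tsum (range n) fun k _ => hγ0 k]

theorem summable_of_sq_succ_add_le_sq_add {d γ e : ℕ → ℝ} (hd : ∀ k, 0 ≤ d k)
    (he : ∀ k, 0 ≤ e k) (hγ : Summable γ) (hγ0 : ∀ k, 0 ≤ γ k)
    (h : ∀ k, d (k + 1) ^ 2 + e k ≤ (d k + γ k) ^ 2) : Summable e := by
  set Γ := ∑' k, γ k
  have hΓ : 0 ≤ Γ := tsum_nonneg hγ0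
  have hstep : ∀ k, d (k + 1) ≤ d k + γ k := fun k =>
    (sq_le_sq₀ (hd _) (add_nonneg (hd k) (hγ0 k))).mp (by linarith [h k, he k])
  have hbound : ∀ k, d k ≤ d 0 + Γ := by
    have hpartial : ∀ k, d k ≤ d 0 + ∑ i ∈ range k, γ i := by
      intro k
      induction k with
      | zero => simp
      | succ k ih => rw [sum_range_succ]; linarith [hstep k]
    exact fun k => (hpartial k).trans (by linarith [hγ.sum_le_tsum (range k) fun i _ => hγ0 i])
  refine summable_of_succ_add_le_add (d := fun k => d k ^ 2)
    (γ := fun k => (2 * (d 0 + Γ) + Γ) * γ k) (fun k => sq_nonneg _) he (hγ.mul_left _)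
    (fun k => ?_) fun k => ?_
  · exact mul_nonneg (by linarith [hd 0]) (hγ0 k)
  · have hγΓ : γ k ≤ Γ := hγ.le_tsum k fun i _ => hγ0 i
    have : γ k * (2 * d k + γ k) ≤ γ k * (2 * (d 0 + Γ) + Γ) := by
      gcongr
      · exact hγ0 k
      · linarith [hbound k]
    nlinarith [h k]

theorem tendsto_zero_of_perturbed_quasiFejer {E : Type*} [SeminormedAddCommGroup E]
    [NormedSpace ℝ E] {T : E → E} {Φ : E → ℝ} {c : E} {K : ℝ} {L : NNReal}
    (hT : ∀ x, ‖T x - c‖ ≤ ‖x - c‖) (hΦT : ∀ x, Φ x ^ 2 ≤ K * (‖x - c‖ ^ 2 - ‖T x - c‖ ^ 2))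
    (hΦ0 : ∀ x, 0 ≤ Φ x) (hΦL : LipschitzWith L Φ) {y v : ℕ → E} {β : ℕ → ℝ} {M : ℝ}
    (hv : ∀ k, ‖v k‖ ≤ M) (hβ : ∀ k, 0 ≤ β k) (hβs : Summable β)
    (hy : ∀ k, y (k + 1) = T (y k + β k • v k)) :
    Tendsto (fun k => Φ (y k)) atTop (𝓝 0) := by
  have hM : 0 ≤ M := (norm_nonneg _).trans (hv 0)
  set x := fun k => y k + β k • v k
  have hxy : ∀ k, ‖x k - y k‖ ≤ M * β k := fun k => by
    simpa [x, norm_smul, abs_of_nonneg (hβ k), mul_comm] using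
      mul_le_mul_of_nonneg_left (hv k) (hβ k)
  set e := fun k => ‖x k - c‖ ^ 2 - ‖y (k + 1) - c‖ ^ 2
  have he : Summable e := by
    refine summable_of_sq_succ_add_le_sq_add (d := fun k => ‖y k - c‖) (γ := fun k => M * β k)
      (fun k => norm_nonneg _) (fun k => ?_) (hβs.mul_left M) (fun k => mul_nonneg hM (hβ k))
      fun k => ?_
    · simp only [e, hy]
      nlinarith [hT (x k), norm_nonneg (T (x k) - c)]
    · have : ‖x k - c‖ ≤ ‖y k - c‖ + M * β k := by
        linarith [norm_sub_le_norm_sub_add_norm_sub (x k) (y k) c, hxy k]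
      simp only [e]
      nlinarith [norm_nonneg (x k - c)]
  have hΦx : Tendsto (fun k => Φ (x k)) atTop (𝓝 0) := by
    refine squeeze_zero (fun k => hΦ0 _) (fun k => ?_) (g := fun k => √(K * e k)) ?_
    · exact (le_abs_self _).trans (Real.abs_le_sqrt (by simpa [e, hy] using hΦT (x k)))
    · simpa using (he.tendsto_atTop_zero.const_mul K).sqrt
  refine squeeze_zero (fun k => hΦ0 _) (fun k => ?_) (g := fun k => Φ (x k) + L * (M * β k)) ?_
  · have hdist : dist (Φ (y k)) (Φ (x k)) ≤ L * (M * β k) := by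
      refine (hΦL.dist_le_mul _ _).trans ?_
      rw [dist_eq_norm, norm_sub_rev]
      exact mul_le_mul_of_nonneg_left (hxy k) L.2
    linarith [(abs_sub_le_iff.mp (Real.dist_eq _ _ ▸ hdist)).1]
  · simpa using hΦx.add ((hβs.tendsto_atTop_zero.const_mul M).const_mul (L : ℝ))

theorem norm_sub_sq_le_mul_of_pythagorean {E : Type*} [SeminormedAddCommGroup E] {p : ℕ → E}
    {c : E} (h : ∀ k, ‖p (k + 1) - c‖ ^ 2 + ‖p (k + 1) - p k‖ ^ 2 ≤ ‖p k - c‖ ^ 2) (n : ℕ) :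
    ‖p n - p 0‖ ^ 2 ≤ n * (‖p 0 - c‖ ^ 2 - ‖p n - c‖ ^ 2) := by
  have hlength : ‖p n - p 0‖ ≤ ∑ k ∈ range n, ‖p (k + 1) - p k‖ := by
    have := dist_le_range_sum_dist p n
    simp only [dist_eq_norm] at this
    rw [norm_sub_rev]
    convert this using 2 with k
    exact norm_sub_rev _ _
  calc ‖p n - p 0‖ ^ 2 ≤ (∑ k ∈ range n, ‖p (k + 1) - p k‖) ^ 2 := by gcongr
    _ ≤ n * ∑ k ∈ range n, ‖p (k + 1) - p k‖ ^ 2 := by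
      simpa using sq_sum_le_card_mul_sum_sq (s := range n) (f := fun k => ‖p (k + 1) - p k‖)
    _ ≤ n * ∑ k ∈ range n, (‖p k - c‖ ^ 2 - ‖p (k + 1) - c‖ ^ 2) := by
      gcongr with k
      linarith [h k]
    _ = n * (‖p 0 - c‖ ^ 2 - ‖p n - c‖ ^ 2) := by rw [sum_range_sub' fun k => ‖p k - c‖ ^ 2]

section Sweep

variable {E : Type*} {n : ℕ}

def sweepPath (U : Fin n → E → E) (x : E) : ℕ → E
  | 0 => x
  | k + 1 => if h : k < n then U ⟨k, h⟩ (sweepPath U x k) else sweepPath U x k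

theorem sweepPath_eq_foldl (U : Fin n → E → E) (x : E) {m : ℕ} (hm : m ≤ n) :
    sweepPath U x m = Fin.foldl m (fun z i => U (Fin.castLE hm i) z) x := by
  induction m with
  | zero => rfl
  | succ m ih =>
    rw [Fin.foldl_succ_last]
    simp only [Fin.castLE_castSucc]
    rw [← ih (by omega)]
    simp [sweepPath, show m < n by omega]
    rfl

theorem foldl_eq_sweepPath (U : Fin n → E → E) (x : E) :
    Fin.foldl n (fun z i => U i z) x = sweepPath U x n := by
  simp [sweepPath_eq_foldl U x le_rfl]

variable [SeminormedAddCommGroup E]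

/-- The norm form of Cegielski's cutter inequality, at the single point `c`. -/
def IsCutterAt (T : E → E) (c : E) : Prop :=
  ∀ z, ‖T z - c‖ ^ 2 + ‖T z - z‖ ^ 2 ≤ ‖z - c‖ ^ 2

variable {U : Fin n → E → E} {c : E}

theorem sweepPath_pythagorean (hU : ∀ i, IsCutterAt (U i) c) (x : E) (k : ℕ) :
    ‖sweepPath U x (k + 1) - c‖ ^ 2 + ‖sweepPath U x (k + 1) - sweepPath U x k‖ ^ 2 ≤
      ‖sweepPath U x k - c‖ ^ 2 := by
  by_cases h : k < n
  · simpa [sweepPath, h] using hU ⟨k, h⟩ (sweepPath U x k)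
  · simp [sweepPath, h]

theorem antitone_norm_sweepPath_sub (hU : ∀ i, IsCutterAt (U i) c) (x : E) :
    Antitone fun k => ‖sweepPath U x k - c‖ := by
  refine antitone_nat_of_succ_le fun k => (sq_le_sq₀ (norm_nonneg _) (norm_nonneg _)).mp ?_
  linarith [sweepPath_pythagorean hU x k, sq_nonneg ‖sweepPath U x (k + 1) - sweepPath U x k‖]

theorem norm_sweepPath_sub_le (hU : ∀ i, IsCutterAt (U i) c) (x : E) (k : ℕ) :
    ‖sweepPath U x k - c‖ ≤ ‖x - c‖ :=
  antitone_norm_sweepPath_sub hU x (Nat.zero_le k)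

theorem norm_sweepPath_sub_sq_le (hU : ∀ i, IsCutterAt (U i) c) (x : E) {m : ℕ} (hm : m ≤ n) :
    ‖sweepPath U x m - x‖ ^ 2 ≤ n * (‖x - c‖ ^ 2 - ‖sweepPath U x n - c‖ ^ 2) := by
  calc ‖sweepPath U x m - x‖ ^ 2 ≤ m * (‖x - c‖ ^ 2 - ‖sweepPath U x m - c‖ ^ 2) :=
        norm_sub_sq_le_mul_of_pythagorean (sweepPath_pythagorean hU x) m
    _ ≤ n * (‖x - c‖ ^ 2 - ‖sweepPath U x n - c‖ ^ 2) := by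
      have hm0 := norm_sweepPath_sub_le hU x m
      have hmn := antitone_norm_sweepPath_sub hU x hm
      gcongr
      exact sub_nonneg.mpr (by gcongr)

end Sweep

section Hyperplane

variable {E : Type*} [NormedAddCommGroup E] [InnerProductSpace ℝ E]

noncomputable def hyperplaneProj (a : E) (b : ℝ) (x : E) : E := x + ((b - ⟪a, x⟫) / ‖a‖ ^ 2) • a

theorem inner_hyperplaneProj {a : E} (ha : a ≠ 0) (b : ℝ) (x : E) :
    ⟪a, hyperplaneProj a b x⟫ = b := by
  have : ‖a‖ ≠ 0 := norm_ne_zero_iff.mpr ha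
  simp only [hyperplaneProj, inner_add_right, inner_smul_right, real_inner_self_eq_norm_sq]
  field_simp
  ring

theorem isCutterAt_hyperplaneProj {a c : E} {b : ℝ} (ha : a ≠ 0) (hc : ⟪a, c⟫ = b) :
    IsCutterAt (hyperplaneProj a b) c := by
  intro x
  set p := hyperplaneProj a b x
  have hstep : p - x = ((b - ⟪a, x⟫) / ‖a‖ ^ 2) • a := by simp [p, hyperplaneProj]
  have horth : ⟪p - c, p - x⟫ = 0 := by
    rw [hstep, inner_smul_right, inner_sub_left, real_inner_comm a p, real_inner_comm a c,
      inner_hyperplaneProj ha, hc, sub_self, mul_zero]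
  rw [show x - c = (p - c) - (p - x) by abel, norm_sub_sq_real (p - c), horth]
  linarith

theorem sum_sq_residual_le {n : ℕ} {a : Fin n → E} (ha : ∀ i, a i ≠ 0) {b : Fin n → ℝ} {c : E}
    (hc : ∀ i, ⟪a i, c⟫ = b i) (x : E) :
    ∑ i, (b i - ⟪a i, x⟫) ^ 2 ≤ n * (∑ i, ‖a i‖ ^ 2) *
      (‖x - c‖ ^ 2 - ‖sweepPath (fun i => hyperplaneProj (a i) (b i)) x n - c‖ ^ 2) := by
  set U := fun i => hyperplaneProj (a i) (b i)
  have hU : ∀ i, IsCutterAt (U i) c := fun i => isCutterAt_hyperplaneProj (ha i) (hc i)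
  rw [mul_comm _ (∑ i, _), mul_assoc, sum_mul]
  refine sum_le_sum fun i _ => ?_
  set w := sweepPath U x (i + 1)
  have hw : ⟪a i, w⟫ = b i := by simp [w, sweepPath, U, inner_hyperplaneProj (ha i)]
  have hres : b i - ⟪a i, x⟫ = ⟪a i, w - x⟫ := by rw [inner_sub_right, hw]
  calc (b i - ⟪a i, x⟫) ^ 2 ≤ (‖a i‖ * ‖w - x‖) ^ 2 := by
        rw [hres, ← sq_abs]
        gcongr
        exact abs_real_inner_le_norm _ _
    _ ≤ ‖a i‖ ^ 2 * (n * (‖x - c‖ ^ 2 - ‖sweepPath U x n - c‖ ^ 2)) := by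
        rw [mul_pow]
        gcongr
        exact norm_sweepPath_sub_sq_le hU x i.isLt

end Hyperplane

theorem abs_clip_sub_le {s : ℝ} (hs0 : 0 ≤ s) (hs1 : s ≤ 1) (t : ℝ) :
    |min (max t 0) 1 - s| ≤ |t - s| :=
  calc |min (max t 0) 1 - s| = |min (max t 0) 1 - min (max s 0) 1| := by
        rw [max_eq_left hs0, min_eq_left hs1]
    _ ≤ max |max t 0 - max s 0| |1 - 1| := abs_min_sub_min_le_max _ _ _ _
    _ ≤ |t - s| := by simpa using abs_max_sub_max_le_abs t s 0

theorem norm_clip_sub_le {ι : Type*} [Fintype ι] {w z c : EuclideanSpace ℝ ι}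
    (hw : ∀ j, w j = min (max (z j) 0) 1) (hc : ∀ j, 0 ≤ c j ∧ c j ≤ 1) :
    ‖w - c‖ ≤ ‖z - c‖ := by
  rw [EuclideanSpace.norm_eq, EuclideanSpace.norm_eq]
  gcongr with j
  simpa only [PiLp.sub_apply, Real.norm_eq_abs, hw] using abs_clip_sub_le (hc j).1 (hc j).2 (z j)

section Residual

variable {ι E : Type*} [Fintype ι] [NormedAddCommGroup E] [InnerProductSpace ℝ E]

theorem sqrt_sum_sq_inner_le (a : ι → E) (w : E) :
    √(∑ i, ⟪a i, w⟫ ^ 2) ≤ √(∑ i, ‖a i‖ ^ 2) * ‖w‖ := by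
  rw [← Real.sqrt_sq (norm_nonneg w), ← Real.sqrt_mul (sum_nonneg fun i _ => sq_nonneg _),
    sum_mul]
  gcongr with i
  rw [← mul_pow, ← sq_abs]
  gcongr
  exact abs_real_inner_le_norm _ _

theorem lipschitzWith_sqrt_sum_sq_residual (a : ι → E) (b : ι → ℝ) :
    LipschitzWith (√(∑ i, ‖a i‖ ^ 2)).toNNReal fun x => √(∑ i, (b i - ⟪a i, x⟫) ^ 2) := by
  refine LipschitzWith.of_le_add_mul _ fun x u => ?_
  let r : E → EuclideanSpace ℝ ι := fun x => WithLp.toLp 2 fun i => b i - ⟪a i, x⟫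
  have hr : ∀ x, ‖r x‖ = √(∑ i, (b i - ⟪a i, x⟫) ^ 2) := fun x => by
    simp [r, EuclideanSpace.norm_eq]
  have hdiff : ‖r x - r u‖ = √(∑ i, ⟪a i, u - x⟫ ^ 2) := by
    simp only [r, EuclideanSpace.norm_eq, PiLp.sub_apply, Real.norm_eq_abs, sq_abs,
      inner_sub_right]
    exact congrArg _ (sum_congr rfl fun i _ => by ring)
  rw [← hr, ← hr, Real.coe_toNNReal _ (Real.sqrt_nonneg _), dist_eq_norm, norm_sub_rev]
  calc ‖r x‖ ≤ ‖r u‖ + ‖r x - r u‖ := norm_le_norm_add_norm_sub' _ _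
    _ ≤ ‖r u‖ + √(∑ i, ‖a i‖ ^ 2) * ‖u - x‖ := by
      rw [hdiff]
      gcongr
      exact sqrt_sum_sq_inner_le a _

end Residual

theorem art_strong_perturbation_resilience_general
    (I J : ℕ)
    (a : Fin I → EuclideanSpace ℝ (Fin J)) (ha : ∀ i, a i ≠ 0)
    (b : Fin I → ℝ)
    (hC : ∃ x : EuclideanSpace ℝ (Fin J),
      (∀ j, 0 ≤ x j ∧ x j ≤ 1) ∧ (∀ i, ⟪a i, x⟫ = b i))
    (U : Fin I → EuclideanSpace ℝ (Fin J) → EuclideanSpace ℝ (Fin J))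
    (hU : ∀ i x, U i x = x + ((b i - ⟪a i, x⟫) / ‖a i‖ ^ 2) • a i)
    (Q : EuclideanSpace ℝ (Fin J) → EuclideanSpace ℝ (Fin J))
    (hQ : ∀ (x : EuclideanSpace ℝ (Fin J)) (j : Fin J), Q x j = min (max (x j) 0) 1)
    (AC : EuclideanSpace ℝ (Fin J) → EuclideanSpace ℝ (Fin J))
    (hAC : ∀ x, AC x = Q (Fin.foldl I (fun z i => U i z) x))
    (Prox : EuclideanSpace ℝ (Fin J) → ℝ)
    (hProx : ∀ x, Prox x = Real.sqrt (∑ i, (b i - ⟪a i, x⟫) ^ 2))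
    (ε : ℝ) (hε : 0 < ε)
    (y : ℕ → EuclideanSpace ℝ (Fin J))
    (v : ℕ → EuclideanSpace ℝ (Fin J)) (hv : ∃ M : ℝ, ∀ k, ‖v k‖ ≤ M)
    (β : ℕ → ℝ) (hβ : ∀ k, 0 ≤ β k) (hβsum : Summable β)
    (hrec : ∀ k : ℕ, y (k + 1) = AC (y k + β k • v k)) :
    ∃ k : ℕ, Prox (y k) ≤ ε := by
  obtain ⟨c, hcbox, hcb⟩ := hC
  obtain ⟨M, hM⟩ := hv
  obtain rfl : U = fun i => hyperplaneProj (a i) (b i) := funext fun i => funext (hU i)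
  obtain rfl : Prox = fun x => √(∑ i, (b i - ⟪a i, x⟫) ^ 2) := funext hProx
  have hcut : ∀ i, IsCutterAt (hyperplaneProj (a i) (b i)) c := fun i =>
    isCutterAt_hyperplaneProj (ha i) (hcb i)
  have hclip : ∀ x, ‖AC x - c‖ ≤ ‖sweepPath (fun i => hyperplaneProj (a i) (b i)) x I - c‖ :=
    fun x => norm_clip_sub_le (fun j => by rw [hAC, hQ, foldl_eq_sweepPath]) hcbox
  have hT : ∀ x, ‖AC x - c‖ ≤ ‖x - c‖ := fun x =>
    (hclip x).trans (norm_sweepPath_sub_le hcut x I)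
  have hproxT : ∀ x, (√(∑ i, (b i - ⟪a i, x⟫) ^ 2)) ^ 2 ≤
      I * (∑ i, ‖a i‖ ^ 2) * (‖x - c‖ ^ 2 - ‖AC x - c‖ ^ 2) := fun x => by
    rw [Real.sq_sqrt (sum_nonneg fun i _ => sq_nonneg _)]
    refine (sum_sq_residual_le ha hcb x).trans ?_
    gcongr
    exact hclip x
  have hlim := tendsto_zero_of_perturbed_quasiFejer hT hproxT (fun x => Real.sqrt_nonneg _)
    (lipschitzWith_sqrt_sum_sq_residual a b) hM hβ hβsum hrec
  exact (hlim.eventually (Iic_mem_nhds hε)).exists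

/-- strong perturbation resilience of the ART-based Basic Algorithm. With
`C = {x ∈ [0,1]^J : ⟨aⁱ,x⟩ = b_i for all i}` nonempty, `A_C = Q ∘ U_I ∘ ⋯ ∘ U_1` (Kaczmarz
sweep followed by clipping to `[0,1]`) and `Prox(x) = √(∑_i (b_i − ⟨aⁱ,x⟩)²)`, every
perturbed sequence `y^{k+1} = A_C(y^k + β_k v^k)` with `y⁰ ∈ [0,1]^J`, `{v^k}` bounded,
`β_k ≥ 0` and `∑ β_k < ∞` has, for each `ε > 0`, an iterate with `Prox(y^k) ≤ ε`. -/
theorem art_strong_perturbation_resilience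
    (I J : ℕ)
    (a : Fin I → EuclideanSpace ℝ (Fin J)) (ha : ∀ i, a i ≠ 0)
    (b : Fin I → ℝ)
    (hC : ∃ x : EuclideanSpace ℝ (Fin J),
      (∀ j, 0 ≤ x j ∧ x j ≤ 1) ∧ (∀ i, ⟪a i, x⟫ = b i))
    (U : Fin I → EuclideanSpace ℝ (Fin J) → EuclideanSpace ℝ (Fin J))
    (hU : ∀ i x, U i x = x + ((b i - ⟪a i, x⟫) / ‖a i‖ ^ 2) • a i)
    (Q : EuclideanSpace ℝ (Fin J) → EuclideanSpace ℝ (Fin J))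
    (hQ : ∀ (x : EuclideanSpace ℝ (Fin J)) (j : Fin J), Q x j = min (max (x j) 0) 1)
    (AC : EuclideanSpace ℝ (Fin J) → EuclideanSpace ℝ (Fin J))
    (hAC : ∀ x, AC x = Q (Fin.foldl I (fun z i => U i z) x))
    (Prox : EuclideanSpace ℝ (Fin J) → ℝ)
    (hProx : ∀ x, Prox x = Real.sqrt (∑ i, (b i - ⟪a i, x⟫) ^ 2))
    (ε : ℝ) (hε : 0 < ε)
    (y : ℕ → EuclideanSpace ℝ (Fin J)) (hy0 : ∀ j, 0 ≤ y 0 j ∧ y 0 j ≤ 1)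
    (v : ℕ → EuclideanSpace ℝ (Fin J)) (hv : ∃ M : ℝ, ∀ k, ‖v k‖ ≤ M)
    (β : ℕ → ℝ) (hβ : ∀ k, 0 ≤ β k) (hβsum : Summable β)
    (hrec : ∀ k : ℕ, y (k + 1) = AC (y k + β k • v k)) :
    ∃ k : ℕ, Prox (y k) ≤ ε :=
  art_strong_perturbation_resilience_general I J a ha b hC U hU Q hQ AC hAC Prox hProx ε hε y v hv β
    hβ hβsum hrec
end

section
/- Let A be a real I × J matrix, b ∈ ℝ^I, and q ∈ ℝ^J. Let P_Ω be the nearest-point projection of ℝ^J onto the box Ω = [0,1]^J, and define f(λ) = ½‖q − Aᵀλ − P_Ω(q − Aᵀλ)‖² − ½‖q − Aᵀλ‖² − ⟨λ, b⟩ + ½‖q‖² for λ ∈ ℝ^I. Then weak duality holds: for every λ ∈ ℝ^I and every x ∈ [0,1]^J with Ax = b, f(λ) ≤ ½‖x − q‖². -/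
open scoped RealInnerProductSpace

/-!
The dual objective is `f(λ) = min_{x ∈ [0,1]^J} L(x, λ)` for the Lagrangian
`L(x, λ) = ½‖x − q‖² + ⟪λ, Ax − b⟫`: completing the square,
`L(x, λ) = ½‖(q − Aᵀλ) − x‖² − ½‖q − Aᵀλ‖² − ⟪λ, b⟫ + ½‖q‖²`, which the projection `P_Ω`
minimises over the box. For feasible `x` the penalty `⟪λ, Ax − b⟫` vanishes, so
`f(λ) ≤ L(x, λ) = ½‖x − q‖²`.
-/

section CompletingTheSquare

variable {E : Type*} [NormedAddCommGroup E] [InnerProductSpace ℝ E]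

lemma half_norm_sub_sq_add_inner (x q v : E) :
    1 / 2 * ‖x - q‖ ^ 2 + ⟪x, v⟫
      = 1 / 2 * ‖q - v - x‖ ^ 2 - 1 / 2 * ‖q - v‖ ^ 2 + 1 / 2 * ‖q‖ ^ 2 := by
  rw [norm_sub_sq_real, norm_sub_sq_real (q - v), norm_sub_sq_real q, inner_sub_left,
    real_inner_comm x q, real_inner_comm x v]
  ring

lemma half_norm_sub_sq_sub_le_of_norm_le {x q v p : E} (hp : ‖q - v - p‖ ≤ ‖q - v - x‖) :
    1 / 2 * ‖q - v - p‖ ^ 2 - 1 / 2 * ‖q - v‖ ^ 2 - ⟪x, v⟫ + 1 / 2 * ‖q‖ ^ 2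
      ≤ 1 / 2 * ‖x - q‖ ^ 2 := by
  have hsq : ‖q - v - p‖ ^ 2 ≤ ‖q - v - x‖ ^ 2 := pow_le_pow_left₀ (norm_nonneg _) hp 2
  linarith [half_norm_sub_sq_add_inner x q v]

end CompletingTheSquare

lemma EuclideanSpace.inner_transpose_eq_inner {m n : Type*} [Fintype m] [Fintype n]
    (A : Matrix m n ℝ) {lam b : EuclideanSpace ℝ m} {x v : EuclideanSpace ℝ n}
    (hv : ∀ j, v j = ∑ i, A i j * lam i) (hx : ∀ i, ∑ j, A i j * x j = b i) :
    ⟪x, v⟫ = ⟪lam, b⟫ := by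
  have hv' : WithLp.ofLp v = Matrix.vecMul (WithLp.ofLp lam) A :=
    funext fun j => by simp only [hv, Matrix.vecMul, dotProduct, mul_comm]
  have hx' : Matrix.mulVec A (WithLp.ofLp x) = WithLp.ofLp b := funext hx
  simp only [EuclideanSpace.inner_eq_star_dotProduct, star_trivial]
  rw [hv', ← Matrix.dotProduct_mulVec, hx', dotProduct_comm]

/-- weak duality: for the dual objective
`f(λ) = ½‖q − Aᵀλ − P_Ω(q − Aᵀλ)‖² − ½‖q − Aᵀλ‖² − ⟨λ, b⟩ + ½‖q‖²` of the projection
problem `min {½‖x − q‖² : Ax = b, x ∈ [0,1]^J}`, we have `f(λ) ≤ ½‖x − q‖²` for every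
`λ ∈ ℝ^I` and every feasible `x` (i.e. `x ∈ [0,1]^J` with `Ax = b`). Here `P_Ω` is the
nearest-point projection onto the unit box and `At λ = Aᵀλ`. -/
theorem weak_duality_box_projection
    (I J : ℕ)
    (A : Matrix (Fin I) (Fin J) ℝ)
    (b : EuclideanSpace ℝ (Fin I))
    (q : EuclideanSpace ℝ (Fin J))
    (P : EuclideanSpace ℝ (Fin J) → EuclideanSpace ℝ (Fin J))
    (hP : ∀ x : EuclideanSpace ℝ (Fin J),
      (∀ j, 0 ≤ P x j ∧ P x j ≤ 1) ∧
      ∀ z : EuclideanSpace ℝ (Fin J), (∀ j, 0 ≤ z j ∧ z j ≤ 1) → ‖x - P x‖ ≤ ‖x - z‖)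
    (At : EuclideanSpace ℝ (Fin I) → EuclideanSpace ℝ (Fin J))
    (hAt : ∀ (lam : EuclideanSpace ℝ (Fin I)) (j : Fin J), At lam j = ∑ i, A i j * lam i)
    (f : EuclideanSpace ℝ (Fin I) → ℝ)
    (hf : ∀ lam, f lam = 1 / 2 * ‖q - At lam - P (q - At lam)‖ ^ 2
        - 1 / 2 * ‖q - At lam‖ ^ 2 - ⟪lam, b⟫ + 1 / 2 * ‖q‖ ^ 2) :
    ∀ (lam : EuclideanSpace ℝ (Fin I)) (x : EuclideanSpace ℝ (Fin J)),
      (∀ j, 0 ≤ x j ∧ x j ≤ 1) → (∀ i, (∑ j, A i j * x j) = b i) →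
      f lam ≤ 1 / 2 * ‖x - q‖ ^ 2 := by
  intro lam x hx hAx
  rw [hf, ← EuclideanSpace.inner_transpose_eq_inner A (hAt lam) hAx]
  exact half_norm_sub_sq_sub_le_of_norm_le ((hP _).2 x hx)
end

section
/- Let A be a real I × J matrix, b ∈ ℝ^I, and q ∈ ℝ^J, and suppose the feasible set F = { x ∈ [0,1]^J : Ax = b } is nonempty. Let P_Ω be the nearest-point projection of ℝ^J onto Ω = [0,1]^J, and define f(λ) = ½‖q − Aᵀλ − P_Ω(q − Aᵀλ)‖² − ½‖q − Aᵀλ‖² − ⟨λ, b⟩ + ½‖q‖². If λ* ∈ ℝ^I is a maximizer of f over ℝ^I, then x* = P_Ω(q − Aᵀλ*) belongs to F and is the unique minimizer of ½‖x − q‖² over F; that is, x* is the nearest point to q in the feasible set F. -/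
/-!
The dual objective is the Lagrangian `L(z, λ) = ½‖z - q‖² + ⟪Aᵀλ, z⟫ - ⟪λ, b⟫` minimised over
the box, attained at `z = P (q - Aᵀλ)`, because
`L(z, λ) - f(λ) = ½‖z - (q - Aᵀλ)‖² - ½ dist(q - Aᵀλ, Ω)²`.
Along `λ* + tμ` the Lagrangian at a fixed `z` changes with slope `⟪μ, Az - b⟫`, and the box
minimiser `x_t` moves by at most `t‖Aᵀμ‖` because a projection onto a convex set is
1-Lipschitz; maximality of `λ*` therefore gives `⟪μ, Ax* - b⟫ ≤ 0` for all `μ`, i.e. `Ax* = b`.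
On the feasible set `L(·, λ*) = ½‖· - q‖²`, so the identity above turns optimality and
uniqueness of `x*` into those of the nearest point of the box to `q - Aᵀλ*`.
-/

open scoped RealInnerProductSpace
open Filter Topology
open scoped Matrix

section Matrix
variable {m n : Type*} [Fintype m] [Fintype n] [DecidableEq m] [DecidableEq n]

theorem Matrix.inner_toEuclideanLin_transpose (A : Matrix m n ℝ) (μ : EuclideanSpace ℝ m)
    (x : EuclideanSpace ℝ n) : ⟪Aᵀ.toEuclideanLin μ, x⟫ = ⟪μ, A.toEuclideanLin x⟫ := by
  rw [← Matrix.conjTranspose_eq_transpose_of_trivial,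
    Matrix.toEuclideanLin_conjTranspose_eq_adjoint, LinearMap.adjoint_inner_left]

theorem Matrix.forall_inner_toEuclideanLin_transpose_eq_iff (A : Matrix m n ℝ)
    (x : EuclideanSpace ℝ n) (b : EuclideanSpace ℝ m) :
    (∀ μ, ⟪Aᵀ.toEuclideanLin μ, x⟫ = ⟪μ, b⟫) ↔ ∀ i, ∑ j, A i j * x j = b i := by
  simp_rw [Matrix.inner_toEuclideanLin_transpose]
  have happly (i : m) : A.toEuclideanLin x i = ∑ j, A i j * x j := rfl
  refine ⟨fun h i => ?_, fun h μ => congrArg _ (PiLp.ext fun i => (happly i).trans (h i))⟩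
  rw [← happly, ext_inner_left ℝ h]

end Matrix

theorem convex_unitBox (ι : Type*) :
    Convex ℝ {x : EuclideanSpace ℝ ι | ∀ j, 0 ≤ x j ∧ x j ≤ 1} := by
  intro x hx y hy s t hs ht hst j
  simp only [PiLp.add_apply, PiLp.smul_apply, smul_eq_mul]
  constructor <;> nlinarith [hx j, hy j]

theorem nonpos_of_forall_pos_le_mul {c K : ℝ} (h : ∀ t > 0, c ≤ t * K) : c ≤ 0 := by
  have hlim : Tendsto (fun t : ℝ => t * K) (𝓝[>] 0) (𝓝 0) :=
    ((continuous_mul_const K).tendsto' 0 0 (zero_mul K)).mono_left nhdsWithin_le_nhds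
  exact ge_of_tendsto hlim (eventually_nhdsWithin_of_forall h)

variable {E F : Type*} [NormedAddCommGroup E] [InnerProductSpace ℝ E]
  [NormedAddCommGroup F] [InnerProductSpace ℝ F]

def IsNearestPointMap (K : Set E) (P : E → E) : Prop :=
  ∀ x, P x ∈ K ∧ ∀ z ∈ K, ‖x - P x‖ ≤ ‖x - z‖

namespace IsNearestPointMap

variable {K : Set E} {P : E → E}

theorem real_inner_sub_nonpos (hP : IsNearestPointMap K P) (hK : Convex ℝ K) (x : E) {z : E}
    (hz : z ∈ K) : ⟪x - P x, z - P x⟫ ≤ 0 := by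
  have : Nonempty K := ⟨⟨P x, (hP x).1⟩⟩
  have hinf : ‖x - P x‖ = ⨅ w : K, ‖x - w‖ :=
    le_antisymm (le_ciInf fun w => (hP x).2 w w.2) <|
      ciInf_le (f := fun w : K => ‖x - w‖) ⟨0, by rintro _ ⟨w, rfl⟩; positivity⟩ ⟨P x, (hP x).1⟩
  exact (norm_eq_iInf_iff_real_inner_le_zero hK (hP x).1).1 hinf z hz

theorem norm_sub_sq_add_norm_sub_sq_le (hP : IsNearestPointMap K P) (hK : Convex ℝ K) (x : E)
    {z : E} (hz : z ∈ K) : ‖x - P x‖ ^ 2 + ‖z - P x‖ ^ 2 ≤ ‖x - z‖ ^ 2 := by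
  have hvi := hP.real_inner_sub_nonpos hK x hz
  rw [show x - z = (x - P x) - (z - P x) by abel, norm_sub_sq_real (x - P x) (z - P x)]
  linarith

theorem eq_of_norm_sub_le (hP : IsNearestPointMap K P) (hK : Convex ℝ K) {x z : E} (hz : z ∈ K)
    (h : ‖x - z‖ ≤ ‖x - P x‖) : z = P x := by
  have hpyth := hP.norm_sub_sq_add_norm_sub_sq_le hK x hz
  have hsq : ‖x - z‖ ^ 2 ≤ ‖x - P x‖ ^ 2 := by gcongr
  have : ‖z - P x‖ ^ 2 = 0 := le_antisymm (by linarith) (by positivity)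
  simpa [sub_eq_zero] using this

theorem norm_sub_le_norm_sub (hP : IsNearestPointMap K P) (hK : Convex ℝ K) (x y : E) :
    ‖P x - P y‖ ≤ ‖x - y‖ := by
  have hx := hP.real_inner_sub_nonpos hK x (hP y).1
  have hy := hP.real_inner_sub_nonpos hK y (hP x).1
  have hmono : ‖P x - P y‖ ^ 2 ≤ ⟪x - y, P x - P y⟫ := by
    rw [← neg_sub (P x) (P y), inner_neg_right] at hx
    rw [← real_inner_self_eq_norm_sq, show x - y = (x - P x) - (y - P y) + (P x - P y) by abel,
      inner_add_left (x - P x - (y - P y)), inner_sub_left (x - P x)]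
    linarith
  nlinarith [real_inner_le_norm (x - y) (P x - P y), norm_nonneg (P x - P y), norm_nonneg (x - y)]

end IsNearestPointMap

section Duality

variable (P : E → E) (T : F →ₗ[ℝ] E) (q : E) (b : F)

noncomputable def dualObjective (lam : F) : ℝ :=
  1 / 2 * ‖q - T lam - P (q - T lam)‖ ^ 2 - 1 / 2 * ‖q - T lam‖ ^ 2 - ⟪lam, b⟫ + 1 / 2 * ‖q‖ ^ 2

noncomputable def lagrangian (z : E) (lam : F) : ℝ :=
  1 / 2 * ‖z - q‖ ^ 2 + ⟪T lam, z⟫ - ⟪lam, b⟫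

theorem lagrangian_sub_dualObjective (z : E) (lam : F) :
    lagrangian T q b z lam - dualObjective P T q b lam =
      1 / 2 * ‖z - (q - T lam)‖ ^ 2 - 1 / 2 * ‖q - T lam - P (q - T lam)‖ ^ 2 := by
  rw [lagrangian, dualObjective, show z - (q - T lam) = (z - q) + T lam by abel,
    norm_add_sq_real, norm_sub_sq_real q, inner_sub_left, real_inner_comm (T lam) z]
  ring

theorem dualObjective_eq_lagrangian (lam : F) :
    dualObjective P T q b lam = lagrangian T q b (P (q - T lam)) lam := by
  have h := lagrangian_sub_dualObjective P T q b (P (q - T lam)) lam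
  rw [norm_sub_rev (P (q - T lam))] at h
  linarith

theorem dualObjective_le_lagrangian {K : Set E} (hP : IsNearestPointMap K P) (lam : F) {z : E}
    (hz : z ∈ K) : dualObjective P T q b lam ≤ lagrangian T q b z lam := by
  have h := lagrangian_sub_dualObjective P T q b z lam
  have hnear : ‖q - T lam - P (q - T lam)‖ ≤ ‖z - (q - T lam)‖ := by
    rw [norm_sub_rev z]; exact (hP _).2 z hz
  have : ‖q - T lam - P (q - T lam)‖ ^ 2 ≤ ‖z - (q - T lam)‖ ^ 2 := by gcongr
  linarith

theorem lagrangian_add_smul (z : E) (lam μ : F) (t : ℝ) :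
    lagrangian T q b z (lam + t • μ) = lagrangian T q b z lam + t * (⟪T μ, z⟫ - ⟪μ, b⟫) := by
  simp only [lagrangian, map_add, map_smul, inner_add_left, real_inner_smul_left]
  ring

theorem lagrangian_eq_of_forall_inner_eq {z : E} (hz : ∀ μ, ⟪T μ, z⟫ = ⟪μ, b⟫) (lam : F) :
    lagrangian T q b z lam = 1 / 2 * ‖z - q‖ ^ 2 := by
  rw [lagrangian, hz, add_sub_cancel_right]

variable {P T q b} {K : Set E}

theorem inner_apply_le_of_isMaxOn_dualObjective (hP : IsNearestPointMap K P) (hK : Convex ℝ K)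
    {lamStar : F} (hmax : IsMaxOn (dualObjective P T q b) Set.univ lamStar)
    (μ : F) : ⟪T μ, P (q - T lamStar)⟫ ≤ ⟪μ, b⟫ := by
  suffices ∀ t > 0, ⟪T μ, P (q - T lamStar)⟫ - ⟪μ, b⟫ ≤ t * ‖T μ‖ ^ 2 by
    linarith [nonpos_of_forall_pos_le_mul this]
  intro t ht
  set xt := P (q - T (lamStar + t • μ))
  have hxt : ⟪T μ, xt⟫ ≤ ⟪μ, b⟫ := by
    have hlam : dualObjective P T q b (lamStar + t • μ) ≤ _ := hmax (Set.mem_univ _)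
    rw [dualObjective_eq_lagrangian, lagrangian_add_smul] at hlam
    have := dualObjective_le_lagrangian P T q b hP lamStar (hP (q - T (lamStar + t • μ))).1
    nlinarith
  have hclose : ‖P (q - T lamStar) - xt‖ ≤ t * ‖T μ‖ :=
    calc ‖P (q - T lamStar) - xt‖ ≤ ‖(q - T lamStar) - (q - T (lamStar + t • μ))‖ :=
          hP.norm_sub_le_norm_sub hK _ _
      _ = t * ‖T μ‖ := by
          rw [map_add, map_smul, sub_sub_sub_cancel_left, add_sub_cancel_left, norm_smul,
            Real.norm_of_nonneg ht.le]
  calc ⟪T μ, P (q - T lamStar)⟫ - ⟪μ, b⟫ ≤ ⟪T μ, P (q - T lamStar) - xt⟫ := by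
        rw [inner_sub_right]; linarith
    _ ≤ ‖T μ‖ * ‖P (q - T lamStar) - xt‖ := real_inner_le_norm _ _
    _ ≤ ‖T μ‖ * (t * ‖T μ‖) := by gcongr
    _ = t * ‖T μ‖ ^ 2 := by ring

theorem inner_apply_eq_of_isMaxOn_dualObjective (hP : IsNearestPointMap K P) (hK : Convex ℝ K)
    {lamStar : F} (hmax : IsMaxOn (dualObjective P T q b) Set.univ lamStar)
    (μ : F) : ⟪T μ, P (q - T lamStar)⟫ = ⟪μ, b⟫ := by
  have h := inner_apply_le_of_isMaxOn_dualObjective hP hK hmax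
  refine le_antisymm (h μ) ?_
  simpa using h (-μ)

theorem half_norm_sub_sq_sub_eq_of_isMaxOn_dualObjective (hP : IsNearestPointMap K P)
    (hK : Convex ℝ K) {lamStar : F}
    (hmax : IsMaxOn (dualObjective P T q b) Set.univ lamStar) {x : E}
    (hx : ∀ μ, ⟪T μ, x⟫ = ⟪μ, b⟫) :
    1 / 2 * ‖x - q‖ ^ 2 - 1 / 2 * ‖P (q - T lamStar) - q‖ ^ 2 =
      1 / 2 * ‖q - T lamStar - x‖ ^ 2 - 1 / 2 * ‖q - T lamStar - P (q - T lamStar)‖ ^ 2 := by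
  rw [← lagrangian_eq_of_forall_inner_eq T q b hx lamStar,
    ← lagrangian_eq_of_forall_inner_eq T q b (inner_apply_eq_of_isMaxOn_dualObjective hP hK hmax)
      lamStar, ← dualObjective_eq_lagrangian, lagrangian_sub_dualObjective, norm_sub_rev x]

theorem half_norm_sub_sq_le_of_isMaxOn_dualObjective (hP : IsNearestPointMap K P)
    (hK : Convex ℝ K) {lamStar : F}
    (hmax : IsMaxOn (dualObjective P T q b) Set.univ lamStar) {x : E}
    (hxK : x ∈ K) (hx : ∀ μ, ⟪T μ, x⟫ = ⟪μ, b⟫) :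
    1 / 2 * ‖P (q - T lamStar) - q‖ ^ 2 ≤ 1 / 2 * ‖x - q‖ ^ 2 := by
  have hgap := half_norm_sub_sq_sub_eq_of_isMaxOn_dualObjective hP hK hmax hx
  have hnear : ‖q - T lamStar - P (q - T lamStar)‖ ^ 2 ≤ ‖q - T lamStar - x‖ ^ 2 := by
    gcongr; exact (hP _).2 x hxK
  linarith

theorem eq_of_half_norm_sub_sq_eq_of_isMaxOn_dualObjective (hP : IsNearestPointMap K P)
    (hK : Convex ℝ K) {lamStar : F}
    (hmax : IsMaxOn (dualObjective P T q b) Set.univ lamStar) {x : E}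
    (hxK : x ∈ K) (hx : ∀ μ, ⟪T μ, x⟫ = ⟪μ, b⟫)
    (heq : 1 / 2 * ‖x - q‖ ^ 2 = 1 / 2 * ‖P (q - T lamStar) - q‖ ^ 2) :
    x = P (q - T lamStar) := by
  have hgap := half_norm_sub_sq_sub_eq_of_isMaxOn_dualObjective hP hK hmax hx
  refine hP.eq_of_norm_sub_le hK hxK ?_
  exact (pow_le_pow_iff_left₀ (norm_nonneg _) (norm_nonneg _) two_ne_zero).1 (by linarith)

end Duality

theorem dual_maximizer_recovers_projection_general
    (I J : ℕ)
    (A : Matrix (Fin I) (Fin J) ℝ)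
    (b : EuclideanSpace ℝ (Fin I))
    (q : EuclideanSpace ℝ (Fin J))
    (P : EuclideanSpace ℝ (Fin J) → EuclideanSpace ℝ (Fin J))
    (hP : ∀ x : EuclideanSpace ℝ (Fin J),
      (∀ j, 0 ≤ P x j ∧ P x j ≤ 1) ∧
      ∀ z : EuclideanSpace ℝ (Fin J), (∀ j, 0 ≤ z j ∧ z j ≤ 1) → ‖x - P x‖ ≤ ‖x - z‖)
    (At : EuclideanSpace ℝ (Fin I) → EuclideanSpace ℝ (Fin J))
    (hAt : ∀ (lam : EuclideanSpace ℝ (Fin I)) (j : Fin J), At lam j = ∑ i, A i j * lam i)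
    (f : EuclideanSpace ℝ (Fin I) → ℝ)
    (hf : ∀ lam, f lam = 1 / 2 * ‖q - At lam - P (q - At lam)‖ ^ 2
        - 1 / 2 * ‖q - At lam‖ ^ 2 - ⟪lam, b⟫ + 1 / 2 * ‖q‖ ^ 2)
    (lamStar : EuclideanSpace ℝ (Fin I))
    (hmax : ∀ lam : EuclideanSpace ℝ (Fin I), f lam ≤ f lamStar) :
    (∀ j, 0 ≤ P (q - At lamStar) j ∧ P (q - At lamStar) j ≤ 1) ∧
    (∀ i, (∑ j, A i j * P (q - At lamStar) j) = b i) ∧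
    (∀ x : EuclideanSpace ℝ (Fin J), (∀ j, 0 ≤ x j ∧ x j ≤ 1) →
      (∀ i, (∑ j, A i j * x j) = b i) →
      1 / 2 * ‖P (q - At lamStar) - q‖ ^ 2 ≤ 1 / 2 * ‖x - q‖ ^ 2) ∧
    (∀ x : EuclideanSpace ℝ (Fin J), (∀ j, 0 ≤ x j ∧ x j ≤ 1) →
      (∀ i, (∑ j, A i j * x j) = b i) →
      1 / 2 * ‖x - q‖ ^ 2 = 1 / 2 * ‖P (q - At lamStar) - q‖ ^ 2 →
      x = P (q - At lamStar)) := by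
  obtain rfl : At = Aᵀ.toEuclideanLin := funext fun lam => PiLp.ext (hAt lam)
  obtain rfl : f = dualObjective P Aᵀ.toEuclideanLin q b := funext hf
  have hnear : IsNearestPointMap {x | ∀ j, 0 ≤ x j ∧ x j ≤ 1} P := fun x => hP x
  have hbox := convex_unitBox (Fin J)
  have hfeas := A.forall_inner_toEuclideanLin_transpose_eq_iff
  have hmaxOn := isMaxOn_univ_iff.2 hmax
  refine ⟨(hP _).1, (hfeas _ b).1 (inner_apply_eq_of_isMaxOn_dualObjective hnear hbox hmaxOn),
    fun x hxK hx => ?_, fun x hxK hx => ?_⟩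
  · exact half_norm_sub_sq_le_of_isMaxOn_dualObjective hnear hbox hmaxOn hxK ((hfeas x b).2 hx)
  · exact eq_of_half_norm_sub_sq_eq_of_isMaxOn_dualObjective hnear hbox hmaxOn hxK
      ((hfeas x b).2 hx)

/-- recovering the primal projection from a dual maximizer: if the feasible
set `F = {x ∈ [0,1]^J : Ax = b}` is nonempty and `λ*` maximizes the dual objective
`f(λ) = ½‖q − Aᵀλ − P_Ω(q − Aᵀλ)‖² − ½‖q − Aᵀλ‖² − ⟨λ, b⟩ + ½‖q‖²` over `ℝ^I`, then
`x* = P_Ω(q − Aᵀλ*)` is feasible and is the unique minimizer of `½‖x − q‖²` over `F`,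
i.e. the nearest point to `q` in `F`. Here `P_Ω` is the nearest-point projection onto the
unit box and `At λ = Aᵀλ`. -/
theorem dual_maximizer_recovers_projection
    (I J : ℕ)
    (A : Matrix (Fin I) (Fin J) ℝ)
    (b : EuclideanSpace ℝ (Fin I))
    (q : EuclideanSpace ℝ (Fin J))
    (hfeas : ∃ x : EuclideanSpace ℝ (Fin J),
      (∀ j, 0 ≤ x j ∧ x j ≤ 1) ∧ (∀ i, (∑ j, A i j * x j) = b i))
    (P : EuclideanSpace ℝ (Fin J) → EuclideanSpace ℝ (Fin J))
    (hP : ∀ x : EuclideanSpace ℝ (Fin J),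
      (∀ j, 0 ≤ P x j ∧ P x j ≤ 1) ∧
      ∀ z : EuclideanSpace ℝ (Fin J), (∀ j, 0 ≤ z j ∧ z j ≤ 1) → ‖x - P x‖ ≤ ‖x - z‖)
    (At : EuclideanSpace ℝ (Fin I) → EuclideanSpace ℝ (Fin J))
    (hAt : ∀ (lam : EuclideanSpace ℝ (Fin I)) (j : Fin J), At lam j = ∑ i, A i j * lam i)
    (f : EuclideanSpace ℝ (Fin I) → ℝ)
    (hf : ∀ lam, f lam = 1 / 2 * ‖q - At lam - P (q - At lam)‖ ^ 2
        - 1 / 2 * ‖q - At lam‖ ^ 2 - ⟪lam, b⟫ + 1 / 2 * ‖q‖ ^ 2)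
    (lamStar : EuclideanSpace ℝ (Fin I))
    (hmax : ∀ lam : EuclideanSpace ℝ (Fin I), f lam ≤ f lamStar) :
    (∀ j, 0 ≤ P (q - At lamStar) j ∧ P (q - At lamStar) j ≤ 1) ∧
    (∀ i, (∑ j, A i j * P (q - At lamStar) j) = b i) ∧
    (∀ x : EuclideanSpace ℝ (Fin J), (∀ j, 0 ≤ x j ∧ x j ≤ 1) →
      (∀ i, (∑ j, A i j * x j) = b i) →
      1 / 2 * ‖P (q - At lamStar) - q‖ ^ 2 ≤ 1 / 2 * ‖x - q‖ ^ 2) ∧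
    (∀ x : EuclideanSpace ℝ (Fin J), (∀ j, 0 ≤ x j ∧ x j ≤ 1) →
      (∀ i, (∑ j, A i j * x j) = b i) →
      1 / 2 * ‖x - q‖ ^ 2 = 1 / 2 * ‖P (q - At lamStar) - q‖ ^ 2 →
      x = P (q - At lamStar)) :=
  dual_maximizer_recovers_projection_general I J A b q P hP At hAt f hf lamStar hmax
end
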